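/- arXiv:2410.07556 — 5 statements merged into one kernel-verified Lean document; each statement's English description precedes it below -/
import Mathlib

section
/- Let G be a finite 2-group acting faithfully on a finite set X. Then there exists a function f : X → {1,2,3} such that there is no nontrivial g ∈ G with f(g·x) = f(x) for all x ∈ X. -/
/-!
Induct on the size of a `G`-invariant finite set `S`. If `|S| ≥ 2`, the `2`-group `G` has a set
`B ⊂ S` that each element either fixes or swaps with `S \ B`: an orbit if `G` is not transitive on
`S`, otherwise the orbit of an index-`2` subgroup containing a point stabiliser. Colour `B`
distinguishingly for its setwise stabiliser and `S \ B` for the pointwise stabiliser of `B`, and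
shift the colours on `S \ B` by `t ∈ ℤ/3`. An element preserving such a colouring and fixing `B`
setwise acts trivially on `S`. If both `t = 0` and `t = 1` fail, witnesses `g₀`, `g₁` swap `B` and
`S \ B`, so `h = g₁ * g₀` stabilises `B` and raises every colour on `B` by `1`; then `h ^ 2 ^ k = 1`
forces `2 ^ k = 0` in `ℤ/3`.
-/

open MulAction Pointwise

theorem IsPGroup.exists_le_index_eq_prime {p : ℕ} [hp : Fact p.Prime] {G : Type*} [Group G]
    [Finite G] (hG : IsPGroup p G) {H : Subgroup G} (hH : H ≠ ⊤) :
    ∃ M : Subgroup G, H ≤ M ∧ M.index = p := by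
  obtain ⟨n, hn⟩ := hG.exists_card_eq
  obtain ⟨a, ha⟩ := (hG.to_subgroup H).exists_card_eq
  obtain ⟨j, hj⟩ := hG.index H
  have hj0 : j ≠ 0 := by
    rintro rfl
    exact hH (Subgroup.index_eq_one.mp hj)
  have hpow := H.card_mul_index
  rw [ha, hj, hn, ← pow_add] at hpow
  have hajn : a + j = n := Nat.pow_right_injective hp.out.two_le hpow
  obtain ⟨M, hM, hHM⟩ := Sylow.exists_subgroup_card_pow_prime_le p (m := n - 1)
    (hn ▸ pow_dvd_pow p (n.sub_le 1)) H ha (by omega)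
  refine ⟨M, hHM, ?_⟩
  have hM' := M.card_mul_index
  rw [hM, hn, show n = n - 1 + 1 by omega, pow_succ] at hM'
  exact Nat.eq_of_mul_eq_mul_left (pow_pos hp.out.pos _) hM'

section Distinguishing

variable {G X : Type*} [Group G] [MulAction G X]

theorem smul_mem_orbit_subgroup_iff {M : Subgroup G} {x : X} (hM : stabilizer G x ≤ M) (g : G) :
    g • x ∈ orbit M x ↔ g ∈ M := by
  refine ⟨fun hgx => ?_, fun hg => ⟨⟨g, hg⟩, rfl⟩⟩
  obtain ⟨m, hm⟩ := mem_orbit_iff.mp hgx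
  have hstab : g⁻¹ * m ∈ M := hM (by rw [mem_stabilizer_iff, mul_smul, ← Subgroup.smul_def, hm,
    inv_smul_smul])
  simpa using mul_mem m.2 (inv_mem hstab)

theorem smul_orbit_subgroup_eq_sdiff {M : Subgroup G} (hM : M.index = 2) {x : X}
    (hxM : stabilizer G x ≤ M) {g : G} (hg : g ∉ M) : g • orbit M x = orbit G x \ orbit M x := by
  have hmem := smul_mem_orbit_subgroup_iff hxM
  refine (Set.smul_set_subset_iff.mpr fun y hy => ?_).antisymm fun y ⟨hyG, hyM⟩ => ?_
  · obtain ⟨m, rfl⟩ := mem_orbit_iff.mp hy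
    rw [Subgroup.smul_def, smul_smul, Set.mem_sdiff, hmem, Subgroup.mul_mem_iff_of_index_two hM]
    simp [hg, mem_orbit]
  · obtain ⟨k, rfl⟩ := mem_orbit_iff.mp hyG
    rw [hmem] at hyM
    rw [Set.mem_smul_set_iff_inv_smul_mem, smul_smul, hmem, Subgroup.mul_mem_iff_of_index_two hM]
    simp [hg, hyM]

theorem exists_block_of_isPGroup_two [Finite G] (hG : IsPGroup 2 G) {S : Set X}
    (hS : ∀ g : G, g • S = S) (hS2 : S.Nontrivial) :
    ∃ B ⊆ S, B.Nonempty ∧ (S \ B).Nonempty ∧ ∀ g : G, g • B = B ∨ g • B = S \ B := by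
  obtain ⟨x₀, hx₀⟩ := hS2.nonempty
  have horbit : orbit G x₀ ⊆ S := by
    rintro _ ⟨g, rfl⟩
    rw [← hS g]
    exact Set.smul_mem_smul_set hx₀
  by_cases htrans : S ⊆ orbit G x₀
  swap
  · obtain ⟨y, hyS, hy⟩ := Set.not_subset.mp htrans
    exact ⟨orbit G x₀, horbit, ⟨x₀, mem_orbit_self x₀⟩, ⟨y, hyS, hy⟩,
      fun g => .inl (smul_orbit g x₀)⟩
  obtain rfl : S = orbit G x₀ := htrans.antisymm horbit
  have hstab : stabilizer G x₀ ≠ ⊤ := by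
    obtain ⟨y, hyS, hy⟩ := hS2.exists_ne x₀
    obtain ⟨g, rfl⟩ := mem_orbit_iff.mp hyS
    exact fun htop => hy (htop ▸ Subgroup.mem_top g : g ∈ stabilizer G x₀)
  have : Fact (Nat.Prime 2) := ⟨Nat.prime_two⟩
  obtain ⟨M, hstabM, hM⟩ := hG.exists_le_index_eq_prime hstab
  obtain ⟨s, hs⟩ : ∃ s, s ∉ M := by
    by_contra! h
    have := Subgroup.index_eq_one.mpr ((Subgroup.eq_top_iff' M).mpr h)
    omega
  refine ⟨orbit M x₀, fun _ ⟨m, hm⟩ => ⟨m, hm⟩, ⟨x₀, mem_orbit_self x₀⟩,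
    smul_orbit_subgroup_eq_sdiff hM hstabM hs ▸ (Set.Nonempty.smul_set ⟨x₀, mem_orbit_self x₀⟩),
    fun g => ?_⟩
  by_cases hg : g ∈ M
  · exact .inl (smul_orbit (⟨g, hg⟩ : M) x₀)
  · exact .inr (smul_orbit_subgroup_eq_sdiff hM hstabM hg)

variable (G) in
def IsDistinguishing {C : Type*} (S : Set X) (c : X → C) : Prop :=
  ∀ g : G, (∀ x ∈ S, c (g • x) = c x) → ∀ x ∈ S, g • x = x

theorem not_forall_apply_smul_eq_add_one (hG : IsPGroup 2 G) {h : G} {B : Set X} (hB : B.Nonempty)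
    (hhB : h ∈ stabilizer G B) (c : X → ZMod 3) : ¬ ∀ x ∈ B, c (h • x) = c x + 1 := by
  intro hc
  have hpow : ∀ n : ℕ, ∀ x ∈ B, c (h ^ n • x) = c x + n := by
    intro n
    induction n with
    | zero => simp
    | succ n ih =>
      intro x hx
      have hhx : h ^ n • x ∈ B := (mem_stabilizer_set.mp (pow_mem hhB n) x).mpr hx
      rw [pow_succ', mul_smul, hc _ hhx, ih x hx]
      push_cast
      ring
  obtain ⟨k, hk⟩ := hG h
  obtain ⟨x, hx⟩ := hB
  have := hpow (2 ^ k) x hx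
  rw [hk, one_smul, left_eq_add, Nat.cast_pow, Nat.cast_ofNat] at this
  exact pow_ne_zero k (by decide : (2 : ZMod 3) ≠ 0) this

section Piecewise

variable {S B : Set X} [DecidablePred (· ∈ B)] {cB cC : X → ZMod 3}

theorem forall_smul_eq_of_mem_stabilizer (hBS : B ⊆ S)
    (hcB : IsDistinguishing (stabilizer G B) B cB)
    (hcC : IsDistinguishing (fixingSubgroup G B) (S \ B) cC) {t : ZMod 3} {g : G}
    (hgB : g ∈ stabilizer G B) (hg : ∀ x ∈ S, B.piecewise cB (cC · + t) (g • x) =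
      B.piecewise cB (cC · + t) x) :
    ∀ x ∈ S, g • x = x := by
  have hgB' := mem_stabilizer_set.mp hgB
  have hfixB : ∀ x ∈ B, g • x = x := hcB ⟨g, hgB⟩ fun x hx => by
    simpa [Set.piecewise_eq_of_mem, hx, (hgB' x).mpr hx] using hg x (hBS hx)
  have hfixC : ∀ x ∈ S \ B, g • x = x :=
    hcC ⟨g, (mem_fixingSubgroup_iff G).mpr hfixB⟩ fun x hx => by
      have := hg x hx.1
      rwa [Set.piecewise_eq_of_notMem _ _ _ hx.2,
        Set.piecewise_eq_of_notMem _ _ _ (mt (hgB' x).mp hx.2), add_left_inj] at this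
  intro x hx
  by_cases hxB : x ∈ B
  · exact hfixB x hxB
  · exact hfixC x ⟨hx, hxB⟩

theorem exists_isDistinguishing_piecewise (hG : IsPGroup 2 G) (hS : ∀ g : G, g • S = S)
    (hBS : B ⊆ S) (hB : B.Nonempty) (hswap : ∀ g : G, g • B = B ∨ g • B = S \ B)
    (hcB : IsDistinguishing (stabilizer G B) B cB)
    (hcC : IsDistinguishing (fixingSubgroup G B) (S \ B) cC) :
    ∃ t : ZMod 3, IsDistinguishing G S (B.piecewise cB (cC · + t)) := by
  by_contra! h
  have hswapped : ∀ t : ZMod 3, ∃ g : G, (∀ x ∈ S, B.piecewise cB (cC · + t) (g • x) =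
      B.piecewise cB (cC · + t) x) ∧ g • B = S \ B := by
    intro t
    simp only [IsDistinguishing, not_forall] at h
    obtain ⟨g, hg, x, hx, hgx⟩ := h t
    exact ⟨g, hg, (hswap g).resolve_left
      fun hgB => hgx (forall_smul_eq_of_mem_stabilizer hBS hcB hcC hgB hg x hx)⟩
  obtain ⟨g₀, hg₀, hg₀B⟩ := hswapped 0
  obtain ⟨g₁, hg₁, hg₁B⟩ := hswapped 1
  have hg₁B' : g₁ • (S \ B) = B := by
    rw [Set.smul_set_sdiff, hS, hg₁B, Set.sdiff_sdiff_cancel_left hBS]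
  refine not_forall_apply_smul_eq_add_one hG hB (h := g₁ * g₀)
    (by rw [mem_stabilizer_iff, mul_smul, hg₀B, hg₁B']) cB fun x hx => ?_
  have hx₀ : g₀ • x ∈ S \ B := hg₀B ▸ Set.smul_mem_smul_set hx
  have hx₁ : g₁ • g₀ • x ∈ B := hg₁B' ▸ Set.smul_mem_smul_set hx₀
  have h₀ := hg₀ x (hBS hx)
  have h₁ := hg₁ (g₀ • x) hx₀.1
  rw [Set.piecewise_eq_of_notMem _ _ _ hx₀.2, Set.piecewise_eq_of_mem _ _ _ hx, add_zero] at h₀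
  rw [Set.piecewise_eq_of_notMem _ _ _ hx₀.2, Set.piecewise_eq_of_mem _ _ _ hx₁] at h₁
  rw [mul_smul, h₁, h₀]

end Piecewise

theorem exists_isDistinguishing [Finite G] (hG : IsPGroup 2 G) {S : Set X} (hSfin : S.Finite)
    (hS : ∀ g : G, g • S = S) : ∃ c : X → ZMod 3, IsDistinguishing G S c := by
  induction hn : S.ncard using Nat.strong_induction_on generalizing G S with
  | _ n ih =>
  rcases S.subsingleton_or_nontrivial with hS1 | hS2
  · exact ⟨0, fun g _ x hx => hS1 (hS g ▸ Set.smul_mem_smul_set hx) hx⟩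
  obtain ⟨B, hBS, hB, hSB, hswap⟩ := exists_block_of_isPGroup_two hG hS hS2
  classical
  obtain ⟨cB, hcB⟩ := ih B.ncard
    (hn ▸ Set.ncard_lt_ncard ((Set.ssubset_iff_of_subset hBS).mpr hSB) hSfin)
    (hG.to_subgroup (stabilizer G B)) (hSfin.subset hBS) (fun g => g.2) rfl
  obtain ⟨cC, hcC⟩ := ih (S \ B).ncard
    (hn ▸ Set.ncard_lt_ncard (hBS.sdiff_ssubset_of_nonempty hB) hSfin)
    (hG.to_subgroup (fixingSubgroup G B)) hSfin.sdiff (fun g => by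
      rw [Subgroup.smul_def, Set.smul_set_sdiff, hS,
        mem_stabilizer_iff.mp (fixingSubgroup_le_stabilizer G B g.2)]) rfl
  obtain ⟨t, ht⟩ := exists_isDistinguishing_piecewise hG hS hBS hB hswap hcB hcC
  exact ⟨_, ht⟩

end Distinguishing

/-- If a finite `2`-group `G` acts faithfully on a finite set `X`, then there is a
`3`-coloring `f : X → {1,2,3}` such that the only color-preserving element of `G`
is the identity. -/
theorem two_group_faithful_coloring (G X : Type*) [Group G] [Finite G]
    (hG : IsPGroup 2 G) [MulAction G X] [FaithfulSMul G X] [Finite X] :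
    ∃ f : X → ℕ, (∀ x : X, f x ∈ ({1, 2, 3} : Set ℕ)) ∧
      ∀ g : G, (∀ x : X, f (g • x) = f x) → g = 1 := by
  obtain ⟨c, hc⟩ :=
    exists_isDistinguishing hG (Set.toFinite (Set.univ : Set X)) fun g : G => Set.smul_set_univ
  refine ⟨fun x => (c x).val + 1, fun x => ?_, fun g hg => ?_⟩
  · have := (c x).val_lt
    simp only [Set.mem_insert_iff, Set.mem_singleton_iff]
    omega
  · refine eq_of_smul_eq_smul fun x : X => ?_
    rw [one_smul]
    exact hc g (fun y _ => ZMod.val_injective _ (Nat.add_right_cancel (hg y))) x trivial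
end

section
/- Let G = N₁ × N₂ × ⋯ × N_k be a direct product of finite groups, and let H be a subgroup of G. Then there exist subgroups H_i ≤ N_i for i = 1, …, k such that |H| = |H₁|·|H₂|⋯|H_k|; moreover, if H is solvable then each H_i can be taken solvable. -/
/-! Let `Kₘ = H.trivialBelow m` be the subgroup of elements of `H` whose first `m` coordinates
are trivial, so `K₀ = H` and `K_k = ⊥`. The `i`-th projection restricted to `Kᵢ` has kernel
`Kᵢ₊₁`, hence `|Kᵢ| = |Hᵢ| |Kᵢ₊₁|` for its image `Hᵢ ≤ Nᵢ`, and telescoping gives `|H| = ∏ |Hᵢ|`.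
Each `Hᵢ` is a homomorphic image of a subgroup of `H`, so it is solvable when `H` is. -/

theorem Fin.eq_prod_mul_of_eq_mul_succ {M : Type*} [CommMonoid M] :
    ∀ {k : ℕ} (C : ℕ → M) (D : Fin k → M), (∀ i : Fin k, C i = D i * C (i + 1)) →
      C 0 = (∏ i, D i) * C k
  | 0, _, _, _ => by simp
  | k + 1, C, D, h => by
    rw [Fin.prod_univ_succ, mul_assoc, ← Fin.eq_prod_mul_of_eq_mul_succ (fun m => C (m + 1))
      (fun i => D i.succ) fun i => h i.succ]
    exact h 0

namespace Subgroup

variable {G G' : Type*} [Group G] [Group G']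

theorem card_eq_card_map_mul_card_inf_ker (K : Subgroup G) (f : G →* G') :
    Nat.card K = Nat.card (K.map f) * Nat.card ↥(K ⊓ f.ker) := by
  have h := relIndex_mul_relIndex ⊥ (K ⊓ f.ker) K bot_le inf_le_left
  rwa [relIndex_bot_left, relIndex_bot_left, inf_relIndex_left, relIndex_ker, mul_comm,
    eq_comm] at h

theorem isSolvable_map_of_le {H K : Subgroup G} (hKH : K ≤ H) [Group.IsSolvable H]
    (f : G →* G') :
    Group.IsSolvable (K.map f) :=
  have : Group.IsSolvable K := Group.isSolvable_of_isSolvable_injective (inclusion_injective hKH)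
  Group.isSolvable_of_surjective (f.subgroupMap_surjective K)

variable {k : ℕ} {N : Fin k → Type*} [∀ i, Group (N i)]

def trivialBelow (H : Subgroup (∀ i, N i)) (m : ℕ) : Subgroup (∀ i, N i) :=
  H ⊓ pi {i | (i : ℕ) < m} fun _ => ⊥

variable (H : Subgroup (∀ i, N i))

theorem trivialBelow_le (m : ℕ) : H.trivialBelow m ≤ H :=
  inf_le_left

theorem trivialBelow_zero : H.trivialBelow 0 = H := by
  simp [trivialBelow, pi_empty]

theorem trivialBelow_eq_bot : H.trivialBelow k = ⊥ := by
  ext x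
  simp only [trivialBelow, mem_inf, mem_pi, Set.mem_ofPred_eq, mem_bot, Fin.is_lt, forall_const]
  exact ⟨fun hx => funext hx.2, fun hx => hx ▸ ⟨H.one_mem, fun _ => rfl⟩⟩

theorem trivialBelow_succ (i : Fin k) :
    H.trivialBelow (i + 1) = H.trivialBelow i ⊓ (Pi.evalMonoidHom N i).ker := by
  ext x
  simp only [trivialBelow, mem_inf, mem_pi, Set.mem_ofPred_eq, mem_bot, MonoidHom.mem_ker,
    Pi.evalMonoidHom_apply, Nat.lt_succ_iff_lt_or_eq, Fin.val_inj, or_imp, forall_and,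
    forall_eq, and_assoc]

theorem card_trivialBelow (i : Fin k) :
    Nat.card (H.trivialBelow i) = Nat.card ((H.trivialBelow i).map (Pi.evalMonoidHom N i)) *
      Nat.card (H.trivialBelow (i + 1)) := by
  rw [trivialBelow_succ]
  exact card_eq_card_map_mul_card_inf_ker _ _

end Subgroup

theorem subgroup_of_pi_decomposition_general (k : ℕ) (N : Fin k → Type*)
    [∀ i, Group (N i)] (H : Subgroup (∀ i, N i)) :
    ∃ H' : ∀ i, Subgroup (N i),
      Nat.card H = ∏ i, Nat.card (H' i) ∧
      (IsSolvable H → ∀ i, IsSolvable (H' i)) := by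
  refine ⟨fun i => (H.trivialBelow i).map (Pi.evalMonoidHom N i), ?_, fun hH i => ?_⟩
  · simpa only [H.trivialBelow_zero, H.trivialBelow_eq_bot, Subgroup.card_bot, mul_one] using
      Fin.eq_prod_mul_of_eq_mul_succ (fun m => Nat.card (H.trivialBelow m)) _ H.card_trivialBelow
  · have : Group.IsSolvable H := hH
    exact Subgroup.isSolvable_map_of_le (H.trivialBelow_le i) _

/-- If `H` is a subgroup of a direct product `N₁ × ⋯ × N_k` of finite groups, then there
are subgroups `Hᵢ ≤ Nᵢ` with `|H| = |H₁| ⋯ |H_k|`; moreover, if `H` is solvable then the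
`Hᵢ` can be taken solvable. -/
theorem subgroup_of_pi_decomposition (k : ℕ) (N : Fin k → Type*)
    [∀ i, Group (N i)] [∀ i, Finite (N i)] (H : Subgroup (∀ i, N i)) :
    ∃ H' : ∀ i, Subgroup (N i),
      Nat.card H = ∏ i, Nat.card (H' i) ∧
      (IsSolvable H → ∀ i, IsSolvable (H' i)) :=
  subgroup_of_pi_decomposition_general k N H
end

section
/- Let p be a prime, f ≥ 1 an integer, and q = p^f a prime power with q ≥ 4 and q ≠ 16. Then f·q·(q−1) ≤ (q³ − q)^{log_{504}(168)} as real numbers, with equality exactly when q = 8. -/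
/-!
Since `504³⁷ < 168⁴⁵`, the exponent `log₅₀₄ 168` exceeds `37/45`, so it suffices to show
`(f q (q-1))⁴⁵ < (q³-q)³⁷`. Writing `q³ - q = q(q-1)(q+1)`, this follows from `f¹⁵ ≤ q⁷`,
i.e. `f¹⁵ ≤ (p⁷)^f`, which holds for every prime power except `q ∈ {4, 8, 16}`.
The case `q = 4` is checked numerically, and `q = 8` gives equality because `8³ - 8 = 504`
and `3 · 8 · 7 = 168`.
-/

/-- The induction step works because `((n+1)/n)^k` decreases in `n`. -/
theorem Nat.pow_le_pow_of_ge_of_ratio_le {b k N n : ℕ} (hN0 : 0 < N) (hN : N ^ k ≤ b ^ N)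
    (hstep : (N + 1) ^ k ≤ b * N ^ k) (hn : N ≤ n) : n ^ k ≤ b ^ n := by
  induction n, hn using Nat.le_induction with
  | base => exact hN
  | succ n hNn ih =>
    have hratio : (n + 1) ^ k * N ^ k ≤ b * n ^ k * N ^ k :=
      calc (n + 1) ^ k * N ^ k = ((n + 1) * N) ^ k := by rw [mul_pow]
        _ ≤ ((N + 1) * n) ^ k := Nat.pow_le_pow_left (by nlinarith) k
        _ = (N + 1) ^ k * n ^ k := by rw [mul_pow]
        _ ≤ b * N ^ k * n ^ k := Nat.mul_le_mul_right _ hstep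
        _ = b * n ^ k * N ^ k := by ring
    calc (n + 1) ^ k ≤ b * n ^ k := Nat.le_of_mul_le_mul_right hratio (pow_pos hN0 k)
      _ ≤ b * b ^ n := Nat.mul_le_mul_left b ih
      _ = b ^ (n + 1) := by ring

theorem Nat.pow_fifteen_le_prime_pow_pow_seven {p f : ℕ} (hp : p.Prime) (h4 : p ^ f ≠ 4)
    (h8 : p ^ f ≠ 8) (h16 : p ^ f ≠ 16) : f ^ 15 ≤ (p ^ f) ^ 7 := by
  rw [← pow_mul, mul_comm, pow_mul]
  rcases Nat.lt_or_ge f 2 with hf | hf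
  · interval_cases f <;> simp [Nat.one_le_pow _ _ hp.pos]
  rcases eq_or_ne p 2 with rfl | hp2
  · have hf5 : 5 ≤ f := by
      by_contra! hf5
      interval_cases f <;> simp_all
    exact Nat.pow_le_pow_of_ge_of_ratio_le (by norm_num) (by norm_num) (by norm_num) hf5
  · have hp3 : 3 ≤ p := by have := hp.two_le; omega
    calc f ^ 15 ≤ (3 ^ 7) ^ f :=
          Nat.pow_le_pow_of_ge_of_ratio_le (by norm_num) (by norm_num) (by norm_num) hf
      _ ≤ (p ^ 7) ^ f := by gcongr

theorem Real.mul_mul_sub_one_pow_lt_pow_three_sub {f q : ℝ} (hq : 1 < q)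
    (hfq : f ^ 45 ≤ q ^ 21) : (f * q * (q - 1)) ^ 45 < (q ^ 3 - q) ^ 37 := by
  have hq1 : 0 < q - 1 := by linarith
  calc (f * q * (q - 1)) ^ 45 = f ^ 45 * (q * (q - 1)) ^ 8 * (q * (q - 1)) ^ 37 := by ring
    _ ≤ q ^ 21 * (q * (q - 1)) ^ 8 * (q * (q - 1)) ^ 37 := by gcongr
    _ < q ^ 21 * (q * q) ^ 8 * (q * (q - 1)) ^ 37 := by gcongr; linarith
    _ = q ^ 37 * (q * (q - 1)) ^ 37 := by ring
    _ < (q + 1) ^ 37 * (q * (q - 1)) ^ 37 := by gcongr; linarith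
    _ = (q ^ 3 - q) ^ 37 := by ring

theorem Real.lt_rpow_of_pow_lt_pow {a b t : ℝ} {m n : ℕ} (hb : 1 ≤ b) (hn : n ≠ 0)
    (ht : (m : ℝ) / n ≤ t) (h : a ^ n < b ^ m) : a < b ^ t := by
  have hb0 : 0 ≤ b := zero_le_one.trans hb
  have hroot : (b ^ ((m : ℝ) / n)) ^ n = b ^ m := by
    rw [← Real.rpow_mul_natCast hb0, div_mul_cancel₀ _ (Nat.cast_ne_zero.mpr hn),
      Real.rpow_natCast]
  calc a < b ^ ((m : ℝ) / n) := lt_of_pow_lt_pow_left₀ n (by positivity) (hroot ▸ h)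
    _ ≤ b ^ t := Real.rpow_le_rpow_of_exponent_le hb ht

theorem Real.div_lt_logb_504_168 : (37 : ℝ) / 45 < Real.logb 504 168 := by
  have hlog : Real.log ((504 : ℝ) ^ 37) < Real.log ((168 : ℝ) ^ 45) :=
    Real.log_lt_log (by positivity) (by norm_num)
  rw [Real.log_pow, Real.log_pow] at hlog
  rw [Real.logb, lt_div_iff₀ (Real.log_pos (by norm_num))]
  push_cast at hlog
  linarith

/-- For a prime power `q = p^f` with `q ≥ 4` and `q ≠ 16`, one has
`f·q·(q−1) ≤ (q³ − q) ^ log_{504} 168`, with equality exactly when `q = 8`. -/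
theorem fq_qsub_one_le_rpow (p f q : ℕ) (hp : p.Prime) (hf : 1 ≤ f) (hq : q = p ^ f)
    (hq4 : 4 ≤ q) (hq16 : q ≠ 16) :
    (f : ℝ) * (q : ℝ) * ((q : ℝ) - 1) ≤ ((q : ℝ) ^ 3 - (q : ℝ)) ^ Real.logb 504 168 ∧
      ((f : ℝ) * (q : ℝ) * ((q : ℝ) - 1) = ((q : ℝ) ^ 3 - (q : ℝ)) ^ Real.logb 504 168 ↔
        q = 8) := by
  have hq_ge : (4 : ℝ) ≤ q := by exact_mod_cast hq4
  have exponents_eq {r e : ℕ} (hr : r.Prime) (he : e ≠ 0) (h : q = r ^ e) : p = r ∧ f = e :=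
    hp.pow_inj' hr (by omega) he (hq ▸ h)
  by_cases h8 : q = 8
  · obtain ⟨-, rfl⟩ := exponents_eq (e := 3) Nat.prime_two (by norm_num) (by rw [h8]; rfl)
    subst h8
    have heq : ((3 : ℕ) : ℝ) * (8 : ℕ) * ((8 : ℕ) - 1) =
        (((8 : ℕ) : ℝ) ^ 3 - (8 : ℕ)) ^ Real.logb 504 168 := by
      norm_num [Real.rpow_logb]
    exact ⟨heq.le, iff_of_true heq rfl⟩
  have hlt : (f : ℝ) * q * (q - 1) < ((q : ℝ) ^ 3 - q) ^ Real.logb 504 168 := by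
    refine Real.lt_rpow_of_pow_lt_pow (m := 37) (n := 45)
      (by nlinarith [mul_le_mul hq_ge hq_ge (by norm_num) (by positivity)])
      (by norm_num) (by exact_mod_cast Real.div_lt_logb_504_168.le) ?_
    by_cases h4 : q = 4
    · obtain ⟨-, rfl⟩ := exponents_eq (e := 2) Nat.prime_two (by norm_num) (by rw [h4]; rfl)
      subst h4
      norm_num
    refine Real.mul_mul_sub_one_pow_lt_pow_three_sub (by linarith) ?_
    have h := Nat.pow_fifteen_le_prime_pow_pow_seven hp (hq ▸ h4) (hq ▸ h8) (hq ▸ hq16)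
    rw [← hq] at h
    calc (f : ℝ) ^ 45 = ((f ^ 15 : ℕ) : ℝ) ^ 3 := by push_cast; ring
      _ ≤ ((q ^ 7 : ℕ) : ℝ) ^ 3 := by gcongr
      _ = (q : ℝ) ^ 21 := by push_cast; ring
  exact ⟨hlt.le, iff_of_false hlt.ne h8⟩
end

section
/- Let n ≥ 3 be an integer, p a prime, f ≥ 1 an integer, and q = p^f, with (n,q) ≠ (4,2) and (n,q) ≠ (3,4). Then 24^{1/3} · 2f · q^{(n²−n)/2} · ∏_{i=1}^{n−1}(q^i − 1) < q^{μ·(n²−n)/2} as real numbers, where μ = 3·log_{504}(168). -/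
/-!
Write `N = (n² - n)/2`. Dropping all but the first two factors of the product gives
`∏_{i<n} (qⁱ - 1) ≤ (q - 1)(q² - 1) q^(N-3)`, and `24^(1/3) ≤ 3`, so the left side is at most
`6f (q - 1)(q² - 1) q^(2N-3)`. Since `μ ≥ 22/9`, it suffices that
`6f (q - 1)(q² - 1) < q^(3 + 4N/9)`, whose ninth power has integer exponents. For `N ≥ 3`
this follows from `(6f)³ ≤ q⁴`, which holds unless `q ∈ {2, 3, 4, 8}`;
these are checked directly, and `q = 4` needs `N ≥ 4`, i.e. `n ≠ 3`.
-/

open Finset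

lemma prod_pow_sub_one_mul_pow_three_le {R : Type*} [CommRing R] [LinearOrder R]
    [IsStrictOrderedRing R] {x : R} (hx : 1 ≤ x) {m : ℕ} (hm : 2 ≤ m) :
    (∏ i ∈ Icc 1 m, (x ^ i - 1)) * x ^ 3 ≤ (x - 1) * (x ^ 2 - 1) * x ^ (∑ i ∈ Icc 1 m, i) := by
  induction m, hm using Nat.le_induction with
  | base => simp [show Icc 1 2 = {1, 2} from rfl]
  | succ m hm ih =>
    rw [prod_Icc_succ_top (by omega), sum_Icc_succ_top (by omega)]
    have hxm : 1 ≤ x ^ (m + 1) := one_le_pow₀ hx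
    have hrhs : 0 ≤ (x - 1) * (x ^ 2 - 1) * x ^ (∑ i ∈ Icc 1 m, i) := by
      have := one_le_pow₀ (n := 2) hx
      apply mul_nonneg (mul_nonneg _ _) (pow_nonneg _ _) <;> linarith
    calc (∏ i ∈ Icc 1 m, (x ^ i - 1)) * (x ^ (m + 1) - 1) * x ^ 3
        = (∏ i ∈ Icc 1 m, (x ^ i - 1)) * x ^ 3 * (x ^ (m + 1) - 1) := by ring
      _ ≤ (x - 1) * (x ^ 2 - 1) * x ^ (∑ i ∈ Icc 1 m, i) * x ^ (m + 1) :=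
        mul_le_mul ih (by linarith) (by linarith) hrhs
      _ = _ := by rw [pow_add]; ring

lemma sum_Icc_one_sub_one_id (n : ℕ) : ∑ i ∈ Icc 1 (n - 1), i = (n ^ 2 - n) / 2 := by
  have h : ∑ i ∈ range n, i = ∑ i ∈ Icc 1 (n - 1), i := by
    rw [range_eq_Ico]
    rcases n with _ | n
    · rfl
    rw [sum_eq_sum_Ico_succ_bot n.succ_pos, Nat.add_sub_cancel, zero_add]
    rfl
  rw [← h, sum_range_id, Nat.mul_sub_one, sq]

lemma six_mul_pow_three_le_sixteen_pow {f : ℕ} (hf : 4 ≤ f) : (6 * f) ^ 3 ≤ 16 ^ f := by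
  induction f, hf using Nat.le_induction with
  | base => norm_num
  | succ f hf ih =>
    calc (6 * (f + 1)) ^ 3 ≤ (6 * (2 * f)) ^ 3 := by gcongr; omega
      _ = 8 * (6 * f) ^ 3 := by ring
      _ ≤ 16 ^ (f + 1) := by rw [pow_succ' 16 f]; exact Nat.mul_le_mul (by norm_num) ih

lemma six_mul_pow_three_le_pow_four {p f : ℕ} (hp : 2 ≤ p) (hf : 1 ≤ f)
    (h : ¬((p = 2 ∧ f ≤ 3) ∨ (p = 3 ∧ f = 1))) : (6 * f) ^ 3 ≤ (p ^ f) ^ 4 := by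
  rcases le_or_gt 4 f with hf4 | hf3
  · calc (6 * f) ^ 3 ≤ 16 ^ f := six_mul_pow_three_le_sixteen_pow hf4
      _ = (2 ^ f) ^ 4 := by rw [← pow_mul, mul_comm, pow_mul]; norm_num
      _ ≤ (p ^ f) ^ 4 := by gcongr
  · interval_cases f
    · calc (6 * 1) ^ 3 ≤ (4 ^ 1) ^ 4 := by norm_num
        _ ≤ (p ^ 1) ^ 4 := by gcongr; omega
    · calc (6 * 2) ^ 3 ≤ (3 ^ 2) ^ 4 := by norm_num
        _ ≤ (p ^ 2) ^ 4 := by gcongr; omega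
    · calc (6 * 3) ^ 3 ≤ (3 ^ 3) ^ 4 := by norm_num
        _ ≤ (p ^ 3) ^ 4 := by gcongr; omega

lemma six_mul_mul_sub_one_mul_sq_sub_one_pow_nine_lt {p f N : ℕ} (hp : 2 ≤ p) (hf : 1 ≤ f)
    (hN : 3 ≤ N) (hN4 : p ^ f = 4 → 4 ≤ N) :
    (6 * f * ((p : ℝ) ^ f - 1) * (((p : ℝ) ^ f) ^ 2 - 1)) ^ 9 < ((p : ℝ) ^ f) ^ (4 * N + 27) := by
  have hq : (2 : ℝ) ≤ (p : ℝ) ^ f := by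
    exact_mod_cast hp.trans (Nat.le_self_pow (by omega) p)
  have hmono : ((p : ℝ) ^ f) ^ 39 ≤ ((p : ℝ) ^ f) ^ (4 * N + 27) :=
    pow_le_pow_right₀ (by linarith) (by omega)
  by_cases hsmall : (p = 2 ∧ f ≤ 3) ∨ (p = 3 ∧ f = 1)
  · rcases hsmall with ⟨rfl, hf3⟩ | ⟨rfl, rfl⟩
    · interval_cases f
      · exact lt_of_lt_of_le (by norm_num) hmono
      · have hmono4 : ((2 : ℝ) ^ 2) ^ 43 ≤ ((2 : ℝ) ^ 2) ^ (4 * N + 27) :=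
          pow_le_pow_right₀ (by norm_num) (by have := hN4 (by norm_num); omega)
        push_cast
        exact lt_of_lt_of_le (by norm_num) hmono4
      · exact lt_of_lt_of_le (by norm_num) hmono
    · exact lt_of_lt_of_le (by norm_num) hmono
  · have hf6 : (6 * f : ℝ) ^ 3 ≤ ((p : ℝ) ^ f) ^ 4 := by
      exact_mod_cast six_mul_pow_three_le_pow_four hp hf hsmall
    set q : ℝ := (p : ℝ) ^ f
    have hcube : (q - 1) * (q ^ 2 - 1) < q ^ 3 := by nlinarith
    have h0 : 0 ≤ (q - 1) * (q ^ 2 - 1) := by nlinarith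
    calc (6 * f * (q - 1) * (q ^ 2 - 1)) ^ 9
        = ((6 * f : ℝ) ^ 3) ^ 3 * ((q - 1) * (q ^ 2 - 1)) ^ 9 := by ring
      _ ≤ (q ^ 4) ^ 3 * ((q - 1) * (q ^ 2 - 1)) ^ 9 := by gcongr
      _ < (q ^ 4) ^ 3 * (q ^ 3) ^ 9 := by gcongr
      _ = q ^ 39 := by ring
      _ ≤ q ^ (4 * N + 27) := hmono

lemma lt_rpow_div_of_pow_lt {x y : ℝ} (hy : 0 ≤ y) {k m : ℕ} (hk : k ≠ 0)
    (h : x ^ k < y ^ m) : x < y ^ ((m : ℝ) / k) := by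
  refine lt_of_pow_lt_pow_left₀ k (by positivity) ?_
  rwa [← Real.rpow_natCast (y ^ _), ← Real.rpow_mul hy, div_mul_cancel₀ _ (by exact_mod_cast hk),
    Real.rpow_natCast]

lemma twentyfour_rpow_one_div_three_le_three : (24 : ℝ) ^ ((1 : ℝ) / 3) ≤ 3 := by
  rw [← Real.rpow_le_rpow_iff (by positivity) (by norm_num) (by norm_num : (0 : ℝ) < 3),
    ← Real.rpow_mul (by norm_num)]
  norm_num

lemma twentytwo_div_nine_le_three_mul_logb : (22 / 9 : ℝ) ≤ 3 * Real.logb 504 168 := by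
  have hlog : 22 * Real.log 504 ≤ 27 * Real.log 168 := by
    have := Real.log_le_log (by positivity) (by norm_num : (504 : ℝ) ^ 22 ≤ 168 ^ 27)
    rwa [Real.log_pow, Real.log_pow, Nat.cast_ofNat, Nat.cast_ofNat] at this
  rw [Real.logb, mul_div_assoc', le_div_iff₀ (Real.log_pos (by norm_num))]
  linarith

lemma mul_pow_mul_prod_pow_sub_one_lt_rpow {x c e : ℝ} (hx : 1 ≤ x) (hc : 0 ≤ c) {m : ℕ}
    (hm : 2 ≤ m) (h : c * (x - 1) * (x ^ 2 - 1) < x ^ e) :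
    c * x ^ (∑ i ∈ Icc 1 m, i) * ∏ i ∈ Icc 1 m, (x ^ i - 1) <
      x ^ (e + 2 * (∑ i ∈ Icc 1 m, i : ℕ) - 3) := by
  set S := ∑ i ∈ Icc 1 m, i
  set P := ∏ i ∈ Icc 1 m, (x ^ i - 1)
  have hx0 : 0 < x := by linarith
  refine lt_of_mul_lt_mul_right ?_ (by positivity : 0 ≤ x ^ 3)
  calc c * x ^ S * P * x ^ 3 = c * x ^ S * (P * x ^ 3) := by ring
    _ ≤ c * x ^ S * ((x - 1) * (x ^ 2 - 1) * x ^ S) :=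
      mul_le_mul_of_nonneg_left (prod_pow_sub_one_mul_pow_three_le hx hm) (by positivity)
    _ = c * (x - 1) * (x ^ 2 - 1) * x ^ (2 * S) := by ring
    _ < x ^ e * x ^ (2 * S) := by gcongr
    _ = x ^ (e + 2 * S - 3) * x ^ 3 := by
      rw [← Real.rpow_natCast _ (2 * S), ← Real.rpow_natCast _ 3, ← Real.rpow_add hx0,
        ← Real.rpow_add hx0]
      push_cast; ring_nf

theorem psl_n_arith_ineq_general (n p f q : ℕ) (hn : 3 ≤ n) (hp : p.Prime) (hf : 1 ≤ f)
    (hq : q = p ^ f) (h34 : ¬(n = 3 ∧ q = 4)) :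
    (24 : ℝ) ^ ((1 : ℝ) / 3) * (2 * (f : ℝ)) * (q : ℝ) ^ ((n ^ 2 - n) / 2) *
        ∏ i ∈ Finset.Icc 1 (n - 1), ((q : ℝ) ^ i - 1) <
      (q : ℝ) ^ ((3 * Real.logb 504 168) * (((n ^ 2 - n : ℕ) : ℝ) / 2)) := by
  set N := (n ^ 2 - n) / 2
  have hN : n ^ 2 - n = 2 * N := (Nat.two_mul_div_two_of_even <| by
    rw [sq, ← Nat.mul_sub_one]; exact n.even_mul_pred_self).symm
  have h3n : 3 * n ≤ n ^ 2 := by rw [sq]; exact Nat.mul_le_mul_right n hn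
  have hkey := six_mul_mul_sub_one_mul_sq_sub_one_pow_nine_lt hp.two_le hf (N := N) (by omega)
    fun _ ↦ by
      have h4n : 4 * n ≤ n ^ 2 := by rw [sq]; exact Nat.mul_le_mul_right n (by omega)
      omega
  rw [← Nat.cast_pow, ← hq] at hkey
  have hx1 : (1 : ℝ) ≤ q := by exact_mod_cast hq ▸ Nat.one_le_pow _ _ hp.pos
  have hprod := mul_pow_mul_prod_pow_sub_one_lt_rpow hx1 (by positivity) (m := n - 1) (by omega)
    (lt_rpow_div_of_pow_lt (by positivity) (by norm_num) hkey)
  rw [sum_Icc_one_sub_one_id] at hprod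
  rw [hN, Nat.cast_mul, Nat.cast_two, mul_div_cancel_left₀ _ two_ne_zero]
  set P := ∏ i ∈ Icc 1 (n - 1), ((q : ℝ) ^ i - 1)
  have hP0 : 0 ≤ P := prod_nonneg fun i _ ↦ sub_nonneg.2 (one_le_pow₀ hx1)
  calc (24 : ℝ) ^ ((1 : ℝ) / 3) * (2 * f) * q ^ N * P ≤ 3 * (2 * f) * q ^ N * P := by
        gcongr; exact twentyfour_rpow_one_div_three_le_three
    _ = 6 * f * q ^ N * P := by ring
    _ < (q : ℝ) ^ (((4 * N + 27 : ℕ) : ℝ) / (9 : ℕ) + 2 * (N : ℝ) - 3) := hprod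
    _ = (q : ℝ) ^ ((22 / 9 : ℝ) * N) := by push_cast; ring_nf
    _ ≤ (q : ℝ) ^ (3 * Real.logb 504 168 * N) := by
        gcongr; exact twentytwo_div_nine_le_three_mul_logb

/-- The arithmetic inequality `λ·M(G)·|Out(G)| < St(1)^μ` for `G = PSL_n(q)`, `n ≥ 3`,
`(n,q) ∉ {(4,2),(3,4)}`:
`24^(1/3) · 2f · q^((n²−n)/2) · ∏_{i=1}^{n−1}(qⁱ − 1) < q^(μ·(n²−n)/2)`,
where `μ = 3·log_{504} 168`. -/
theorem psl_n_arith_ineq (n p f q : ℕ) (hn : 3 ≤ n) (hp : p.Prime) (hf : 1 ≤ f)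
    (hq : q = p ^ f) (h42 : ¬(n = 4 ∧ q = 2)) (h34 : ¬(n = 3 ∧ q = 4)) :
    (24 : ℝ) ^ ((1 : ℝ) / 3) * (2 * (f : ℝ)) * (q : ℝ) ^ ((n ^ 2 - n) / 2) *
        ∏ i ∈ Finset.Icc 1 (n - 1), ((q : ℝ) ^ i - 1) <
      (q : ℝ) ^ ((3 * Real.logb 504 168) * (((n ^ 2 - n : ℕ) : ℝ) / 2)) :=
  psl_n_arith_ineq_general n p f q hn hp hf hq h34
end

section
/- Let n ≥ 2 be an integer, p a prime, f ≥ 1 an integer, and q = p^f. Then 24^{1/3} · f · q^{2n²−n+1} < q^{μ·n²} as real numbers, where μ = 3·log_{504}(168). -/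
/-!
Since `504³ ≤ 168⁴`, the exponent `μ = 3·log₅₀₄ 168` is at least `9/4`, so for `n ≥ 2` the
exponent `μn²` exceeds `2n² − n + 1` by at least `2`. It remains to absorb `24^{1/3}·f` into a
factor `q²`: by Bernoulli, `24^{1/3}·f < 3f < 4^f ≤ (p^f)² = q²`.
-/

lemma nine_div_four_le_three_mul_logb_504_168 : (9 : ℝ) / 4 ≤ 3 * Real.logb 504 168 := by
  have hpow : Real.log ((504 : ℝ) ^ 3) ≤ Real.log ((168 : ℝ) ^ 4) :=
    Real.log_le_log (by positivity) (by norm_num)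
  rw [Real.log_pow, Real.log_pow] at hpow
  have : (3 : ℝ) / 4 ≤ Real.logb 504 168 := by
    rw [Real.logb, le_div_iff₀ (Real.log_pos (by norm_num))]
    push_cast at hpow
    linarith
  linarith

lemma two_mul_sq_sub_add_three_le_mul_sq {μ : ℝ} (hμ : 9 / 4 ≤ μ) {n : ℕ} (hn : 2 ≤ n) :
    ((2 * n ^ 2 - n + 1 + 2 : ℕ) : ℝ) ≤ μ * n ^ 2 := by
  have hn' : (2 : ℝ) ≤ n := by exact_mod_cast hn
  rw [Nat.cast_add, Nat.cast_add, Nat.cast_sub (by nlinarith)]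
  push_cast
  nlinarith [sq_nonneg ((n : ℝ) - 2)]

lemma rpow_one_div_three_24_lt_three : (24 : ℝ) ^ ((1 : ℝ) / 3) < 3 := by
  calc (24 : ℝ) ^ ((1 : ℝ) / 3) < (3 ^ (3 : ℝ)) ^ ((1 : ℝ) / 3) :=
        Real.rpow_lt_rpow (by norm_num) (by norm_num) (by norm_num)
    _ = 3 := by rw [← Real.rpow_mul (by norm_num)]; norm_num

lemma rpow_one_div_three_24_mul_lt_four_pow (f : ℕ) :
    (24 : ℝ) ^ ((1 : ℝ) / 3) * f < 4 ^ f := by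
  have hbernoulli : 1 + f * (3 : ℝ) ≤ (1 + 3) ^ f := one_add_mul_le_pow (by norm_num) f
  calc (24 : ℝ) ^ ((1 : ℝ) / 3) * f ≤ 3 * f := by
        gcongr; exact rpow_one_div_three_24_lt_three.le
    _ < 4 ^ f := by norm_num at hbernoulli; linarith

lemma four_pow_le_sq_pow {p : ℕ} (hp : 2 ≤ p) (f : ℕ) : (4 : ℝ) ^ f ≤ ((p ^ f : ℕ) : ℝ) ^ 2 := by
  have hp' : (2 : ℝ) ≤ p := by exact_mod_cast hp
  rw [Nat.cast_pow, ← pow_mul, mul_comm, pow_mul]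
  gcongr
  nlinarith

theorem psp_arith_ineq_general (n p f q : ℕ) (hn : 2 ≤ n) (hp : p.Prime)
    (hq : q = p ^ f) :
    (24 : ℝ) ^ ((1 : ℝ) / 3) * (f : ℝ) * (q : ℝ) ^ (2 * n ^ 2 - n + 1) <
      (q : ℝ) ^ ((3 * Real.logb 504 168) * ((n : ℝ) ^ 2)) := by
  subst hq
  set N := 2 * n ^ 2 - n + 1
  have hq : (1 : ℝ) ≤ ((p ^ f : ℕ) : ℝ) := by exact_mod_cast Nat.one_le_pow _ _ hp.pos
  calc (24 : ℝ) ^ ((1 : ℝ) / 3) * f * ((p ^ f : ℕ) : ℝ) ^ N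
      < 4 ^ f * ((p ^ f : ℕ) : ℝ) ^ N := by
        gcongr; exact rpow_one_div_three_24_mul_lt_four_pow f
    _ ≤ ((p ^ f : ℕ) : ℝ) ^ 2 * ((p ^ f : ℕ) : ℝ) ^ N := by
        gcongr; exact four_pow_le_sq_pow hp.two_le f
    _ = ((p ^ f : ℕ) : ℝ) ^ ((N + 2 : ℕ) : ℝ) := by rw [Real.rpow_natCast, pow_add _ N 2, mul_comm]
    _ ≤ ((p ^ f : ℕ) : ℝ) ^ ((3 * Real.logb 504 168) * ((n : ℝ) ^ 2)) :=
        Real.rpow_le_rpow_of_exponent_le hq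
          (two_mul_sq_sub_add_three_le_mul_sq nine_div_four_le_three_mul_logb_504_168 hn)

/-- The arithmetic inequality `λ·M(G)·|Out(G)| < St(1)^μ` for `G = PSp_{2n}(q)`, `n ≥ 2`:
`24^(1/3) · f · q^(2n²−n+1) < q^(μ·n²)`, where `μ = 3·log_{504} 168`. -/
theorem psp_arith_ineq (n p f q : ℕ) (hn : 2 ≤ n) (hp : p.Prime) (hf : 1 ≤ f)
    (hq : q = p ^ f) :
    (24 : ℝ) ^ ((1 : ℝ) / 3) * (f : ℝ) * (q : ℝ) ^ (2 * n ^ 2 - n + 1) <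
      (q : ℝ) ^ ((3 * Real.logb 504 168) * ((n : ℝ) ^ 2)) :=
  psp_arith_ineq_general n p f q hn hp hq
end
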